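/- arXiv:math/0405464 — 2 statements merged into one kernel-verified Lean document; each statement's English description precedes it below -/
import Mathlib

section
/- Let k be an algebraically closed field of characteristic 2 and let R = k[X,Y,Z]/(X³+Y³+Z³), a graded k-algebra with R₁ its degree-1 homogeneous component. Then the k-vector space of triples (A,B,C) ∈ R₁ × R₁ × R₁ satisfying A·X² + B·Y² + C·Z² = 0 in R is one-dimensional, spanned by the triple (X, Y, Z) (which is a syzygy since X·X² + Y·Y² + Z·Z² = X³+Y³+Z³ = 0 in R). -/
open MvPolynomial

lemma fermat_aux_fin3_classify {m : Fin 3 →₀ ℕ} (h : Finsupp.degree m = 1) :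
    m = Finsupp.single 0 1 ∨ m = Finsupp.single 1 1 ∨ m = Finsupp.single 2 1 := by
  have hsum : m 0 + m 1 + m 2 = 1 := by
    have hd : Finsupp.degree m = ∑ i : Fin 3, m i := by
      rw [Finsupp.degree]
      exact Finset.sum_subset (Finset.subset_univ _) (by simp)
    rw [hd, Fin.sum_univ_three] at h
    exact h
  have h3 : (m 0 = 1 ∧ m 1 = 0 ∧ m 2 = 0) ∨ (m 0 = 0 ∧ m 1 = 1 ∧ m 2 = 0) ∨
      (m 0 = 0 ∧ m 1 = 0 ∧ m 2 = 1) := by omega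
  rcases h3 with ⟨h0, h1, h2⟩ | ⟨h0, h1, h2⟩ | ⟨h0, h1, h2⟩
  · left; ext j; fin_cases j <;> simp [Finsupp.single_apply, h0, h1, h2]
  · right; left; ext j; fin_cases j <;> simp [Finsupp.single_apply, h0, h1, h2]
  · right; right; ext j; fin_cases j <;> simp [Finsupp.single_apply, h0, h1, h2]

/-- Over an algebraically closed field of characteristic `2`, the space of syzygies of
total degree `3` for `(X², Y², Z²)` on the Fermat cubic `X³+Y³+Z³ = 0` — i.e. triples
`(A,B,C)` of linear forms with `AX² + BY² + CZ² = 0` in `R = k[X,Y,Z]/(X³+Y³+Z³)` — is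
one-dimensional, spanned by the syzygy `(X,Y,Z)`. (Linear forms lift uniquely to
homogeneous degree-one polynomials, and the relation in `R` means membership in the
ideal `(X³+Y³+Z³)`.) -/
theorem fermat_cubic_degree_three_syzygies_char_two
    (k : Type*) [Field k] [IsAlgClosed k] [CharP k 2] :
    (X 0 * X 0 ^ 2 + X 1 * X 1 ^ 2 + X 2 * X 2 ^ 2 ∈
        Ideal.span {(X 0 ^ 3 + X 1 ^ 3 + X 2 ^ 3 : MvPolynomial (Fin 3) k)}) ∧
      ∀ A B C : MvPolynomial (Fin 3) k,
        A.IsHomogeneous 1 → B.IsHomogeneous 1 → C.IsHomogeneous 1 →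
        A * X 0 ^ 2 + B * X 1 ^ 2 + C * X 2 ^ 2 ∈
          Ideal.span {(X 0 ^ 3 + X 1 ^ 3 + X 2 ^ 3 : MvPolynomial (Fin 3) k)} →
        ∃ c : k, A = c • X 0 ∧ B = c • X 1 ∧ C = c • X 2 := by
  constructor
  · have h : X 0 * X 0 ^ 2 + X 1 * X 1 ^ 2 + X 2 * X 2 ^ 2
        = (X 0 ^ 3 + X 1 ^ 3 + X 2 ^ 3 : MvPolynomial (Fin 3) k) := by ring
    rw [h]
    exact Ideal.subset_span rfl
  · intro A B C hA hB hC hmem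
    rw [Ideal.mem_span_singleton] at hmem
    obtain ⟨q, hq⟩ := hmem
    have key : ∀ m : Fin 3 →₀ ℕ,
        (if Finsupp.single 0 2 ≤ m then coeff (m - Finsupp.single 0 2) A else 0)
      + (if Finsupp.single 1 2 ≤ m then coeff (m - Finsupp.single 1 2) B else 0)
      + (if Finsupp.single 2 2 ≤ m then coeff (m - Finsupp.single 2 2) C else 0)
      = (if Finsupp.single 0 3 ≤ m then coeff (m - Finsupp.single 0 3) q else 0)
      + (if Finsupp.single 1 3 ≤ m then coeff (m - Finsupp.single 1 3) q else 0)
      + (if Finsupp.single 2 3 ≤ m then coeff (m - Finsupp.single 2 3) q else 0) := by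
      intro m
      have h := congrArg (coeff m) hq
      simpa [X_pow_eq_monomial, add_mul, coeff_add, coeff_mul_monomial',
        coeff_monomial_mul'] using h
    have eA0 := key (Finsupp.single 0 3)
    simp [Finsupp.single_le_iff, Finsupp.single_apply, ← Finsupp.single_tsub] at eA0
    have eB1 := key (Finsupp.single 1 3)
    simp [Finsupp.single_le_iff, Finsupp.single_apply, ← Finsupp.single_tsub] at eB1
    have eC2 := key (Finsupp.single 2 3)
    simp [Finsupp.single_le_iff, Finsupp.single_apply, ← Finsupp.single_tsub] at eC2
    have eA1 := key (Finsupp.single 0 2 + Finsupp.single 1 1)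
    simp [Finsupp.single_le_iff, Finsupp.single_apply, Finsupp.add_apply] at eA1
    have eA2 := key (Finsupp.single 0 2 + Finsupp.single 2 1)
    simp [Finsupp.single_le_iff, Finsupp.single_apply, Finsupp.add_apply] at eA2
    have eB0 := key (Finsupp.single 1 2 + Finsupp.single 0 1)
    simp [Finsupp.single_le_iff, Finsupp.single_apply, Finsupp.add_apply] at eB0
    have eB2 := key (Finsupp.single 1 2 + Finsupp.single 2 1)
    simp [Finsupp.single_le_iff, Finsupp.single_apply, Finsupp.add_apply] at eB2
    have eC0 := key (Finsupp.single 2 2 + Finsupp.single 0 1)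
    simp [Finsupp.single_le_iff, Finsupp.single_apply, Finsupp.add_apply] at eC0
    have eC1 := key (Finsupp.single 2 2 + Finsupp.single 1 1)
    simp [Finsupp.single_le_iff, Finsupp.single_apply, Finsupp.add_apply] at eC1
    refine ⟨coeff 0 q, ?_, ?_, ?_⟩
    · ext m
      rw [coeff_smul]
      by_cases hdeg : Finsupp.degree m = 1
      · rcases fermat_aux_fin3_classify hdeg with rfl | rfl | rfl <;>
          simp [coeff_X', Finsupp.single_eq_single_iff, eA0, eA1, eA2]
      · rw [hA.coeff_eq_zero hdeg, (isHomogeneous_X k 0).coeff_eq_zero hdeg, smul_zero]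
    · ext m
      rw [coeff_smul]
      by_cases hdeg : Finsupp.degree m = 1
      · rcases fermat_aux_fin3_classify hdeg with rfl | rfl | rfl <;>
          simp [coeff_X', Finsupp.single_eq_single_iff, eB0, eB1, eB2]
      · rw [hB.coeff_eq_zero hdeg, (isHomogeneous_X k 1).coeff_eq_zero hdeg, smul_zero]
    · ext m
      rw [coeff_smul]
      by_cases hdeg : Finsupp.degree m = 1
      · rcases fermat_aux_fin3_classify hdeg with rfl | rfl | rfl <;>
          simp [coeff_X', Finsupp.single_eq_single_iff, eC0, eC1, eC2]
      · rw [hC.coeff_eq_zero hdeg, (isHomogeneous_X k 2).coeff_eq_zero hdeg, smul_zero]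
end

section
/- Let k be an algebraically closed field of characteristic 2 and let λ ∈ k satisfy λ ≠ 0 and λ³ ≠ 1. Then the set of homogeneous polynomials H ∈ k[X,Y,Z] of degree 3 such that H·(X³+Y³+Z³+λXYZ) lies in the ideal (X⁴, Y⁴, Z⁴) of k[X,Y,Z] is a one-dimensional k-vector space, spanned by H = X³+Y³+Z³ (for which (X³+Y³+Z³)(X³+Y³+Z³+λXYZ) = X⁴(X²+λYZ) + Y⁴(Y²+λXZ) + Z⁴(Z²+λXY)). -/
/-!
Since `(X⁴, Y⁴, Z⁴)` is a monomial ideal, `H·F` lies in it iff the coefficients of `H·F` vanish at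
the ten monomials of degree 6 with all exponents at most 3. These are linear conditions on the ten
coefficients of `H`: the monomials `X³Y³, X³Z³` force the three cube coefficients to agree (this is
where characteristic 2 enters), `X²Y²Z²` kills the coefficient of `XYZ` since `λ ≠ 0`, and the six
monomials of type `X³Y²Z` link the remaining six coefficients in two cycles `h ↦ λh` of length 3,
whence `(1 + λ³)h = 0`. Conversely, in characteristic 2,
`(X³+Y³+Z³)F = X⁴(X²+λYZ) + Y⁴(Y²+λXZ) + Z⁴(Z²+λXY)`.
-/

open MvPolynomial

namespace MvPolynomial

theorem coeff_eq_zero_of_mem_span_X_pow {σ R : Type*} [CommSemiring R] {n : ℕ}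
    {p : MvPolynomial σ R} (hp : p ∈ Ideal.span (Set.range fun i => (X i ^ n : MvPolynomial σ R)))
    {m : σ →₀ ℕ} (hm : ∀ i, m i < n) : coeff m p = 0 := by
  have hgen : Set.range (fun i => (X i ^ n : MvPolynomial σ R)) =
      (fun s => monomial s 1) '' Set.range (fun i => Finsupp.single i n) := by
    rw [← Set.range_comp]
    simp only [Function.comp_def, X_pow_eq_monomial]
  rw [hgen, mem_ideal_span_monomial_image] at hp
  by_contra h
  obtain ⟨_, ⟨i, rfl⟩, hi⟩ := hp m (mem_support_iff.mpr h)
  exact (hm i).not_ge (Finsupp.single_le_iff.mp hi)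

end MvPolynomial

noncomputable def expVec (a b c : ℕ) : Fin 3 →₀ ℕ := Finsupp.equivFunOnFinite.symm ![a, b, c]

@[simp] lemma expVec_apply (a b c : ℕ) (i : Fin 3) : expVec a b c i = ![a, b, c] i := rfl

lemma expVec_eta (m : Fin 3 →₀ ℕ) : expVec (m 0) (m 1) (m 2) = m := by
  ext i; fin_cases i <;> rfl

@[simp] lemma expVec_inj {a b c a' b' c' : ℕ} :
    expVec a b c = expVec a' b' c' ↔ a = a' ∧ b = b' ∧ c = c' := by
  simp [Finsupp.ext_iff, Fin.forall_fin_succ]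

@[simp] lemma expVec_le_iff {a b c a' b' c' : ℕ} :
    expVec a b c ≤ expVec a' b' c' ↔ a ≤ a' ∧ b ≤ b' ∧ c ≤ c' := by
  simp [Finsupp.le_def, Fin.forall_fin_succ]

@[simp] lemma expVec_sub (a b c a' b' c' : ℕ) :
    expVec a b c - expVec a' b' c' = expVec (a - a') (b - b') (c - c') := by
  ext i; fin_cases i <;> rfl

lemma degree_expVec (a b c : ℕ) : (expVec a b c).degree = a + b + c := by
  simp [Finsupp.degree_eq_sum, Fin.sum_univ_three]

lemma expVec_eq_sum_single (a b c : ℕ) :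
    expVec a b c = Finsupp.single 0 a + Finsupp.single 1 b + Finsupp.single 2 c := by
  ext i; fin_cases i <;> simp

lemma coeff_expVec_mul_monomial_expVec {R : Type*} [CommSemiring R] (p : MvPolynomial (Fin 3) R)
    (r : R) (a b c a' b' c' : ℕ) :
    coeff (expVec a b c) (p * monomial (expVec a' b' c') r) =
      if a' ≤ a ∧ b' ≤ b ∧ c' ≤ c then coeff (expVec (a - a') (b - b') (c - c')) p * r else 0 := by
  simp [coeff_mul_monomial']

theorem MvPolynomial.IsHomogeneous.ext_fin_three {R : Type*} [CommSemiring R]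
    {p q : MvPolynomial (Fin 3) R} {d : ℕ} (hp : p.IsHomogeneous d) (hq : q.IsHomogeneous d)
    (h : ∀ a b c, a + b + c = d → coeff (expVec a b c) p = coeff (expVec a b c) q) : p = q := by
  ext m
  rw [← expVec_eta m]
  by_cases hm : (expVec (m 0) (m 1) (m 2)).degree = d
  · exact h _ _ _ (by rwa [degree_expVec] at hm)
  · rw [hp.coeff_eq_zero hm, hq.coeff_eq_zero hm]

lemma range_fin_three {α : Type*} (f : Fin 3 → α) : Set.range f = {f 0, f 1, f 2} := by
  ext; simp [Fin.exists_fin_succ, eq_comm]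

lemma eq_zero_of_add_mul_cycle {R : Type*} [CommRing R] [NoZeroDivisors R] {l a b c : R}
    (hl : 1 + l ^ 3 ≠ 0) (hab : a + b * l = 0) (hbc : b + c * l = 0) (hca : c + a * l = 0) :
    a = 0 ∧ b = 0 ∧ c = 0 := by
  have ha : (1 + l ^ 3) * a = 0 := by linear_combination hab - l * hbc + l ^ 2 * hca
  obtain rfl : a = 0 := (mul_eq_zero.mp ha).resolve_left hl
  obtain rfl : c = 0 := by simpa using hca
  exact ⟨rfl, by simpa using hbc, rfl⟩

section Cubics

variable {k : Type*} [CommRing k]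

noncomputable def fermatCubic : MvPolynomial (Fin 3) k := X 0 ^ 3 + X 1 ^ 3 + X 2 ^ 3

noncomputable def hesseCubic (l : k) : MvPolynomial (Fin 3) k :=
  fermatCubic + C l * (X 0 * X 1 * X 2)

lemma fermatCubic_eq_sum_monomial :
    (fermatCubic : MvPolynomial (Fin 3) k) =
      monomial (expVec 3 0 0) 1 + monomial (expVec 0 3 0) 1 + monomial (expVec 0 0 3) 1 := by
  simp [fermatCubic, expVec_eq_sum_single, X_pow_eq_monomial]

lemma hesseCubic_eq_sum_monomial (l : k) :
    hesseCubic l = monomial (expVec 3 0 0) 1 + monomial (expVec 0 3 0) 1 +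
      monomial (expVec 0 0 3) 1 + monomial (expVec 1 1 1) l := by
  simp [hesseCubic, fermatCubic_eq_sum_monomial, expVec_eq_sum_single, X, monomial_mul,
    C_mul_monomial]

lemma coeff_mul_hesseCubic (H : MvPolynomial (Fin 3) k) (l : k) (a b c : ℕ) :
    coeff (expVec a b c) (H * hesseCubic l) =
      (if 3 ≤ a then coeff (expVec (a - 3) b c) H else 0) +
      (if 3 ≤ b then coeff (expVec a (b - 3) c) H else 0) +
      (if 3 ≤ c then coeff (expVec a b (c - 3)) H else 0) +
      (if 1 ≤ a ∧ 1 ≤ b ∧ 1 ≤ c then coeff (expVec (a - 1) (b - 1) (c - 1)) H * l else 0) := by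
  simp [hesseCubic_eq_sum_monomial, mul_add, coeff_expVec_mul_monomial_expVec]

lemma isHomogeneous_fermatCubic : (fermatCubic : MvPolynomial (Fin 3) k).IsHomogeneous 3 :=
  ((isHomogeneous_X_pow 0 3).add (isHomogeneous_X_pow 1 3)).add (isHomogeneous_X_pow 2 3)

lemma fermatCubic_mul_hesseCubic_mem [CharP k 2] (l : k) :
    fermatCubic * hesseCubic l ∈
      Ideal.span (Set.range fun i => (X i ^ 4 : MvPolynomial (Fin 3) k)) := by
  have h2 : (2 : MvPolynomial (Fin 3) k) = 0 := CharTwo.two_eq_zero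
  refine Ideal.mem_span_range_iff_exists_fun.mpr
    ⟨![X 0 ^ 2 + C l * (X 1 * X 2), X 1 ^ 2 + C l * (X 0 * X 2), X 2 ^ 2 + C l * (X 0 * X 1)], ?_⟩
  simp only [Fin.sum_univ_three, Matrix.cons_val_zero, Matrix.cons_val_one, Matrix.cons_val_two,
    Matrix.head_cons, Matrix.tail_cons]
  unfold hesseCubic fermatCubic
  linear_combination
    (-(X 0 ^ 3 * X 1 ^ 3 + X 0 ^ 3 * X 2 ^ 3 + X 1 ^ 3 * X 2 ^ 3) : MvPolynomial (Fin 3) k) * h2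

end Cubics

section Syzygies

variable {k : Type*} [CommRing k] {l : k} {H : MvPolynomial (Fin 3) k}
  (hmem : H * hesseCubic l ∈ Ideal.span (Set.range fun i => (X i ^ 4 : MvPolynomial (Fin 3) k)))
include hmem

lemma coeff_mul_hesseCubic_eq_zero (a b c : ℕ) (h : a ≤ 3 ∧ b ≤ 3 ∧ c ≤ 3) :
    coeff (expVec a b c) (H * hesseCubic l) = 0 :=
  coeff_eq_zero_of_mem_span_X_pow hmem fun i => by fin_cases i <;> simp <;> omega

lemma coeff_cubes_eq [CharP k 2] :
    coeff (expVec 0 3 0) H = coeff (expVec 3 0 0) H ∧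
      coeff (expVec 0 0 3) H = coeff (expVec 3 0 0) H := by
  have h330 := coeff_mul_hesseCubic_eq_zero hmem 3 3 0 (by norm_num)
  have h303 := coeff_mul_hesseCubic_eq_zero hmem 3 0 3 (by norm_num)
  norm_num [coeff_mul_hesseCubic] at h330 h303
  exact ⟨CharTwo.add_eq_zero.mp h330, CharTwo.add_eq_zero.mp h303⟩

lemma coeff_111_eq_zero [NoZeroDivisors k] (hl : l ≠ 0) : coeff (expVec 1 1 1) H = 0 := by
  have h222 := coeff_mul_hesseCubic_eq_zero hmem 2 2 2 (by norm_num)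
  norm_num [coeff_mul_hesseCubic] at h222
  exact h222.resolve_right hl

lemma coeff_mixed_eq_zero [NoZeroDivisors k] (hl : 1 + l ^ 3 ≠ 0) :
    (coeff (expVec 0 2 1) H = 0 ∧ coeff (expVec 2 1 0) H = 0 ∧ coeff (expVec 1 0 2) H = 0) ∧
      (coeff (expVec 0 1 2) H = 0 ∧ coeff (expVec 2 0 1) H = 0 ∧ coeff (expVec 1 2 0) H = 0) := by
  have h321 := coeff_mul_hesseCubic_eq_zero hmem 3 2 1 (by norm_num)
  have h132 := coeff_mul_hesseCubic_eq_zero hmem 1 3 2 (by norm_num)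
  have h213 := coeff_mul_hesseCubic_eq_zero hmem 2 1 3 (by norm_num)
  have h312 := coeff_mul_hesseCubic_eq_zero hmem 3 1 2 (by norm_num)
  have h123 := coeff_mul_hesseCubic_eq_zero hmem 1 2 3 (by norm_num)
  have h231 := coeff_mul_hesseCubic_eq_zero hmem 2 3 1 (by norm_num)
  norm_num [coeff_mul_hesseCubic] at h321 h132 h213 h312 h123 h231
  exact ⟨eq_zero_of_add_mul_cycle hl h321 h213 h132, eq_zero_of_add_mul_cycle hl h312 h231 h123⟩

end Syzygies

theorem hasse_one_cubic_degree_six_syzygies_char_two_general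
    (k : Type*) [Field k] [CharP k 2]
    (l : k) (hl : l ≠ 0) (hl3 : l ^ 3 ≠ 1) :
    ((X 0 ^ 3 + X 1 ^ 3 + X 2 ^ 3) *
        (X 0 ^ 3 + X 1 ^ 3 + X 2 ^ 3 + MvPolynomial.C l * (X 0 * X 1 * X 2)) ∈
        Ideal.span {(X 0 ^ 4 : MvPolynomial (Fin 3) k), X 1 ^ 4, X 2 ^ 4}) ∧
      ∀ H : MvPolynomial (Fin 3) k, H.IsHomogeneous 3 →
        H * (X 0 ^ 3 + X 1 ^ 3 + X 2 ^ 3 + MvPolynomial.C l * (X 0 * X 1 * X 2)) ∈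
          Ideal.span {(X 0 ^ 4 : MvPolynomial (Fin 3) k), X 1 ^ 4, X 2 ^ 4} →
        ∃ c : k, H = c • (X 0 ^ 3 + X 1 ^ 3 + X 2 ^ 3) := by
  show fermatCubic * hesseCubic l ∈ _ ∧ ∀ H : MvPolynomial (Fin 3) k, H.IsHomogeneous 3 →
    H * hesseCubic l ∈ _ → ∃ c : k, H = c • fermatCubic
  rw [← range_fin_three (fun i => X i ^ 4)]
  refine ⟨fermatCubic_mul_hesseCubic_mem l, fun H hH hmem => ⟨coeff (expVec 3 0 0) H, ?_⟩⟩
  have hl3' : 1 + l ^ 3 ≠ 0 := fun h => hl3 (CharTwo.add_eq_zero.mp h).symm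
  obtain ⟨h030, h003⟩ := coeff_cubes_eq hmem
  have h111 := coeff_111_eq_zero hmem hl
  obtain ⟨⟨h021, h210, h102⟩, ⟨h012, h201, h120⟩⟩ := coeff_mixed_eq_zero hmem hl3'
  have hG := (homogeneousSubmodule (Fin 3) k 3).smul_mem (coeff (expVec 3 0 0) H)
    isHomogeneous_fermatCubic
  refine hH.ext_fin_three hG fun a b c habc => ?_
  obtain rfl : c = 3 - a - b := by omega
  have ha : a ≤ 3 := by omega
  have hb : b ≤ 3 - a := by omega
  interval_cases a <;> interval_cases b <;>
    simp [fermatCubic_eq_sum_monomial, coeff_monomial, h030, h003, h111, h021, h210, h102, h012,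
      h201, h120]

/-- Over an algebraically closed field of characteristic `2`, for `λ ≠ 0` with `λ³ ≠ 1`,
the space of homogeneous polynomials `H` of degree `3` with
`H·(X³+Y³+Z³+λXYZ) ∈ (X⁴,Y⁴,Z⁴)` is one-dimensional, spanned by `H = X³+Y³+Z³`. -/
theorem hasse_one_cubic_degree_six_syzygies_char_two
    (k : Type*) [Field k] [IsAlgClosed k] [CharP k 2]
    (l : k) (hl : l ≠ 0) (hl3 : l ^ 3 ≠ 1) :
    ((X 0 ^ 3 + X 1 ^ 3 + X 2 ^ 3) *
        (X 0 ^ 3 + X 1 ^ 3 + X 2 ^ 3 + MvPolynomial.C l * (X 0 * X 1 * X 2)) ∈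
        Ideal.span {(X 0 ^ 4 : MvPolynomial (Fin 3) k), X 1 ^ 4, X 2 ^ 4}) ∧
      ∀ H : MvPolynomial (Fin 3) k, H.IsHomogeneous 3 →
        H * (X 0 ^ 3 + X 1 ^ 3 + X 2 ^ 3 + MvPolynomial.C l * (X 0 * X 1 * X 2)) ∈
          Ideal.span {(X 0 ^ 4 : MvPolynomial (Fin 3) k), X 1 ^ 4, X 2 ^ 4} →
        ∃ c : k, H = c • (X 0 ^ 3 + X 1 ^ 3 + X 2 ^ 3) :=
  hasse_one_cubic_degree_six_syzygies_char_two_general k l hl hl3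
end
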